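/- arXiv:2510.10968 — 2 statements merged into one kernel-verified Lean document; each statement's English description precedes it below -/
import Mathlib

section
/- For vectors u, v in ℝ^n and a positive semidefinite matrix C with v in the range of C, the inner product ⟨u, v⟩ is bounded by (1/4)⟨u, C u⟩ + ⟨v, C⁺ v⟩, where C⁺ is the Moore–Penrose pseudoinverse of C. -/
/-!
Write `v = C w`. Since `C * C⁺ * C = C` and `C` is symmetric, `⟨v, C⁺ v⟩ = ⟨w, C w⟩`, so the claim
is Young's inequality for the semi-inner product `⟨x, C y⟩`: expand `0 ≤ ⟨u/2 - w, C (u/2 - w)⟩`.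
-/

open Matrix

variable {ι : Type*} [Fintype ι]

theorem Matrix.IsSymm.mulVec_dotProduct_mulVec_mulVec_of_mul_mul_eq_self {R : Type*}
    [CommSemiring R] {C Cp : Matrix ι ι R} (hC : C.IsSymm) (hCp : C * Cp * C = C) (w : ι → R) :
    C *ᵥ w ⬝ᵥ Cp *ᵥ (C *ᵥ w) = w ⬝ᵥ C *ᵥ w := by
  calc C *ᵥ w ⬝ᵥ Cp *ᵥ (C *ᵥ w) = w ⬝ᵥ Cᵀ *ᵥ (Cp *ᵥ (C *ᵥ w)) := by
        rw [dotProduct_transpose_mulVec, dotProduct_comm]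
    _ = w ⬝ᵥ C *ᵥ w := by
      rw [hC.eq, mulVec_mulVec, mulVec_mulVec, hCp]

theorem Matrix.PosSemidef.dotProduct_mulVec_le_quarter_add {C : Matrix ι ι ℝ} (hC : C.PosSemidef)
    (u w : ι → ℝ) :
    u ⬝ᵥ C *ᵥ w ≤ (1 / 4) * (u ⬝ᵥ C *ᵥ u) + w ⬝ᵥ C *ᵥ w := by
  have hsymm : w ⬝ᵥ C *ᵥ u = u ⬝ᵥ C *ᵥ w := by
    rw [← dotProduct_transpose_mulVec, (isHermitian_iff_isSymm.mp hC.1).eq]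
  have hnonneg := hC.dotProduct_mulVec_nonneg ((1 / 2 : ℝ) • u - w)
  simp only [star_trivial, mulVec_sub, mulVec_smul, sub_dotProduct, dotProduct_sub,
    smul_dotProduct, dotProduct_smul, smul_eq_mul, hsymm] at hnonneg
  linarith

theorem weighted_young_inequality_general {n : ℕ}
    (C Cp : Matrix (Fin n) (Fin n) ℝ)
    (hC : C.PosSemidef)
    (h1 : C * Cp * C = C)
    (u v : Fin n → ℝ) (hv : ∃ w, v = C.mulVec w) :
    u ⬝ᵥ v ≤ (1 / 4) * (u ⬝ᵥ C.mulVec u) + v ⬝ᵥ Cp.mulVec v := by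
  obtain ⟨w, rfl⟩ := hv
  rw [(isHermitian_iff_isSymm.mp hC.1).mulVec_dotProduct_mulVec_mulVec_of_mul_mul_eq_self h1]
  exact hC.dotProduct_mulVec_le_quarter_add u w

/-- Weighted Young's inequality: for a positive semidefinite matrix `C`,
a matrix `Cp` satisfying the Moore–Penrose (pseudoinverse) conditions,
and a vector `v` in the range of `C`, the inner product `⟨u, v⟩` is bounded by
`(1/4) ⟨u, C u⟩ + ⟨v, C⁺ v⟩`. -/
theorem weighted_young_inequality {n : ℕ}
    (C Cp : Matrix (Fin n) (Fin n) ℝ)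
    (hC : C.PosSemidef)
    (h1 : C * Cp * C = C) (h2 : Cp * C * Cp = Cp)
    (h3 : (C * Cp)ᵀ = C * Cp) (h4 : (Cp * C)ᵀ = Cp * C)
    (u v : Fin n → ℝ) (hv : ∃ w, v = C.mulVec w) :
    u ⬝ᵥ v ≤ (1 / 4) * (u ⬝ᵥ C.mulVec u) + v ⬝ᵥ Cp.mulVec v :=
  weighted_young_inequality_general C Cp hC h1 u v hv
end

section
/- Let z^(1), …, z^(J) ∈ ℝ^n, let z̄ = (1/J)Σ_i z^(i), and let C(z^(1),…,z^(J)) = (1/J)Σ_i (z^(i) − z̄)(z^(i) − z̄)ᵀ. Then for each fixed j, the divergence of C with respect to z^(j) (i.e., the vector with components Σ_k ∂C_{ik}/∂z^(j)_k) equals ((n+1)/J)(z^(j) − z̄). -/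
/-!
Perturbing the `j`-th particle by `v` moves each centered particle `z^(l) - z̄` by
`(δ_lj - 1/J) v`. Since the centered particles sum to zero, the product rule gives the
directional derivative `∂_v C_ik = (v_i (z^(j) - z̄)_k + (z^(j) - z̄)_i v_k) / J`; taking
`v = e_k` and summing over `k`, the first term contributes `(z^(j) - z̄)_i` once and the
second contributes it `n` times.
-/

open Finset

namespace EmpiricalCovariance

variable {ι κ : Type*}

theorem hasFDerivAt_update_apply [Fintype κ] [DecidableEq ι] (Z : ι → κ → ℝ) (j l : ι)
    (m : κ) (w₀ : κ → ℝ) :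
    HasFDerivAt (fun w => Function.update Z j w l m)
      ((if l = j then 1 else 0 : ℝ) • ContinuousLinearMap.proj (R := ℝ) (φ := fun _ : κ => ℝ) m)
      w₀ := by
  rcases eq_or_ne l j with rfl | hl
  · simpa using hasFDerivAt_apply (𝕜 := ℝ) m w₀
  · simpa [hl] using hasFDerivAt_const (Z l m) w₀

variable [Fintype ι]

noncomputable def empiricalMean (Z : ι → κ → ℝ) (m : κ) : ℝ :=
  1 / (Fintype.card ι : ℝ) * ∑ l, Z l m

noncomputable def centered (Z : ι → κ → ℝ) (l : ι) (m : κ) : ℝ :=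
  Z l m - empiricalMean Z m

noncomputable def empiricalCov (Z : ι → κ → ℝ) (i k : κ) : ℝ :=
  1 / (Fintype.card ι : ℝ) * ∑ l, centered Z l i * centered Z l k

theorem sum_centered (Z : ι → κ → ℝ) (m : κ) : ∑ l, centered Z l m = 0 := by
  rcases isEmpty_or_nonempty ι with _ | _
  · simp
  · have hcard : (Fintype.card ι : ℝ) ≠ 0 := Nat.cast_ne_zero.mpr Fintype.card_ne_zero
    simp only [centered, empiricalMean, sum_sub_distrib, sum_const, card_univ, nsmul_eq_mul]
    field_simp
    ring

theorem sum_indicator_sub_mul_centered [DecidableEq ι] (Z : ι → κ → ℝ) (j : ι) (m : κ) :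
    ∑ l, ((if l = j then 1 else 0) - 1 / (Fintype.card ι : ℝ)) * centered Z l m
      = centered Z j m := by
  simp only [sub_mul, sum_sub_distrib, ite_mul, one_mul, zero_mul, sum_ite_eq', mem_univ,
    if_true, ← mul_sum, sum_centered, mul_zero, sub_zero]

theorem hasFDerivAt_centered_update [Fintype κ] [DecidableEq ι] (Z : ι → κ → ℝ) (j l : ι)
    (m : κ) (w₀ : κ → ℝ) :
    HasFDerivAt (fun w => centered (Function.update Z j w) l m)
      (((if l = j then 1 else 0) - 1 / (Fintype.card ι : ℝ)) •
        ContinuousLinearMap.proj (R := ℝ) (φ := fun _ : κ => ℝ) m) w₀ := by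
  refine ((hasFDerivAt_update_apply Z j l m w₀).sub
    ((HasFDerivAt.fun_sum fun l' _ => hasFDerivAt_update_apply Z j l' m w₀).const_mul
      (1 / (Fintype.card ι : ℝ)))).congr_fderiv ?_
  ext v
  simp [sub_mul, -ite_smul]

theorem fderiv_empiricalCov_update_apply [Fintype κ] [DecidableEq ι] (Z : ι → κ → ℝ) (j : ι)
    (i k : κ) (v : κ → ℝ) :
    fderiv ℝ (fun w => empiricalCov (Function.update Z j w) i k) (Z j) v
      = 1 / (Fintype.card ι : ℝ) * (v i * centered Z j k + centered Z j i * v k) := by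
  have hderiv := (HasFDerivAt.fun_sum (u := univ) fun l _ =>
    (hasFDerivAt_centered_update Z j l i (Z j)).fun_mul
      (hasFDerivAt_centered_update Z j l k (Z j))).const_mul (1 / (Fintype.card ι : ℝ))
  simp only [Function.update_eq_self] at hderiv
  simp only [empiricalCov]
  rw [hderiv.fderiv]
  simp only [smul_apply, add_apply, FunLike.coe_sum, Finset.sum_apply,
    ContinuousLinearMap.proj_apply, smul_eq_mul]
  calc 1 / (Fintype.card ι : ℝ) * ∑ l, (centered Z l i *
          (((if l = j then 1 else 0) - 1 / (Fintype.card ι : ℝ)) * v k) +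
        centered Z l k * (((if l = j then 1 else 0) - 1 / (Fintype.card ι : ℝ)) * v i))
      = 1 / (Fintype.card ι : ℝ) *
          ((∑ l, ((if l = j then 1 else 0) - 1 / (Fintype.card ι : ℝ)) * centered Z l k) * v i +
            (∑ l, ((if l = j then 1 else 0) - 1 / (Fintype.card ι : ℝ)) * centered Z l i) * v k) := by
        simp only [sum_mul, ← sum_add_distrib]
        congr 1
        exact sum_congr rfl fun l _ => by ring
    _ = _ := by
        rw [sum_indicator_sub_mul_centered, sum_indicator_sub_mul_centered]
        ring

theorem sum_fderiv_empiricalCov_update_single [Fintype κ] [DecidableEq ι] [DecidableEq κ]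
    (Z : ι → κ → ℝ) (j : ι) (i : κ) :
    ∑ k, fderiv ℝ (fun w => empiricalCov (Function.update Z j w) i k) (Z j) (Pi.single k 1)
      = (Fintype.card κ + 1) / (Fintype.card ι : ℝ) * centered Z j i := by
  simp only [fderiv_empiricalCov_update_apply, Pi.single_apply, ← mul_sum, sum_add_distrib,
    ite_mul, one_mul, zero_mul, if_true, mul_one, sum_ite_eq, mem_univ, sum_const, card_univ,
    nsmul_eq_mul]
  ring

end EmpiricalCovariance

theorem divergence_empirical_covariance_general {n J : ℕ}
    (Z : Fin J → Fin n → ℝ) (j : Fin J) (i : Fin n) :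
    (∑ k : Fin n,
      fderiv ℝ
        (fun w : Fin n → ℝ =>
          (1 / (J : ℝ)) * ∑ l : Fin J,
            (Function.update Z j w l i
              - (1 / (J : ℝ)) * ∑ l' : Fin J, Function.update Z j w l' i)
            * (Function.update Z j w l k
              - (1 / (J : ℝ)) * ∑ l' : Fin J, Function.update Z j w l' k))
        (Z j) (Pi.single k 1))
    = ((n + 1 : ℝ) / (J : ℝ)) * (Z j i - (1 / (J : ℝ)) * ∑ l : Fin J, Z l i) := by
  simpa only [EmpiricalCovariance.empiricalCov, EmpiricalCovariance.centered,
    EmpiricalCovariance.empiricalMean, Fintype.card_fin]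
    using EmpiricalCovariance.sum_fderiv_empiricalCov_update_single Z j i

/-- Divergence of the empirical covariance with respect to the `j`-th particle:
with `z̄` the empirical mean and
`C(Z) i k = (1/J) ∑ l, (Z l i − z̄ i)(Z l k − z̄ k)`, the vector with components
`∑ k, ∂ C i k / ∂ (z^(j) k)` equals `((n+1)/J) (z^(j) − z̄)`. -/
theorem divergence_empirical_covariance {n J : ℕ} (hJ : 0 < J)
    (Z : Fin J → Fin n → ℝ) (j : Fin J) (i : Fin n) :
    (∑ k : Fin n,
      fderiv ℝ
        (fun w : Fin n → ℝ =>
          (1 / (J : ℝ)) * ∑ l : Fin J,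
            (Function.update Z j w l i
              - (1 / (J : ℝ)) * ∑ l' : Fin J, Function.update Z j w l' i)
            * (Function.update Z j w l k
              - (1 / (J : ℝ)) * ∑ l' : Fin J, Function.update Z j w l' k))
        (Z j) (Pi.single k 1))
    = ((n + 1 : ℝ) / (J : ℝ)) * (Z j i - (1 / (J : ℝ)) * ∑ l : Fin J, Z l i) :=
  divergence_empirical_covariance_general Z j i
end
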